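/- arXiv:1903.06208 — 3 statements merged into one kernel-verified Lean document; each statement's English description precedes it below -/
import Mathlib

section
/- Let w be a weight on ℝ², let 1 < p < ∞ and let δ ∈ (0,1). Suppose the maximal operator M_{4δ} is bounded on L^p(w), i.e. there is a constant C with ‖M_{4δ} f‖_{L^p(w)} ≤ C‖f‖_{L^p(w)} for all f ∈ L^p(w). Then w belongs to the skeleton class 𝒜^S_p at scale δ: the supremum over all x ∈ ℝ² and r ∈ [1,2] of (|S_δ(x,r)|^{−1} ∫_{Q_δ(x)} w dx)·(⨍_{ℓ_δ(x,r)} w^{−p'/p} dx)^p·(⨍_{S_δ(x,r)} w^{−p'/p} dx)^{−1} is finite. -/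
/-!
Test the bound on `f = σ · 1_S`, where `S = S_δ(x,r)` and `σ = w^{-p'/p}`. For `y ∈ Q_δ(x)` each
side-neighbourhood `S^j_δ(x,r)` lies inside `S^j_{4δ}(y,r)`, whose area is at most `4²` times
larger, so `M_{4δ} f ≥ 4⁻² ⨍_{ℓ_δ(x,r)} σ` on `Q_δ(x)`. Since `σ^p w = σ`, the `L^p(w)` norm of
`f` is `(∫_S σ)^{1/p}`, and the boundedness of `M_{4δ}` yields
`w(Q_δ(x)) (⨍_{ℓ_δ(x,r)} σ)^p ≤ (16 C)^p ∫_S σ`. Dividing by `∫_S σ = |S| ⨍_S σ` gives the claim.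
-/

open MeasureTheory Metric Set
open scoped ENNReal NNReal

noncomputable section

/-- Index of a `k`-face of an axis-parallel cube in `ℝⁿ`: a set of `k` "free" coordinates
together with a sign choice for the remaining coordinates (only the signs of coordinates
outside the free set matter). -/
abbrev FaceIdx (n k : ℕ) := {T : Finset (Fin n) // T.card = k} × (Fin n → Bool)

/-- The `k`-face of the axis-parallel cube centered at `x` with side length `2 r`
corresponding to the face index `F`. -/
def kFace {n : ℕ} (k : ℕ) (x : Fin n → ℝ) (r : ℝ) (F : FaceIdx n k) : Set (Fin n → ℝ) :=
  {y | (∀ i ∈ F.1.1, |y i - x i| ≤ r) ∧ ∀ i ∉ F.1.1, y i = x i + (if F.2 i then r else -r)}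

/-- The `δ`-neighborhood of a `k`-face. -/
def faceNbhd {n : ℕ} (k : ℕ) (δ : ℝ) (x : Fin n → ℝ) (r : ℝ) (F : FaceIdx n k) :
    Set (Fin n → ℝ) :=
  Metric.cthickening δ (kFace k x r F)

/-- The `δ`-neighborhood of the whole `k`-skeleton. -/
def skelNbhd {n : ℕ} (k : ℕ) (δ : ℝ) (x : Fin n → ℝ) (r : ℝ) : Set (Fin n → ℝ) :=
  ⋃ F : FaceIdx n k, faceNbhd k δ x r F

/-- The `k`-skeleton maximal function with width `δ` (with values in `ℝ≥0∞`):
`M^k_δ f (x) = sup_{1 ≤ r ≤ 2} min_j ⨍_{S^j_{k,δ}(x,r)} |f|`. -/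
def skelMax (n k : ℕ) (δ : ℝ) (f : (Fin n → ℝ) → ℝ) (x : Fin n → ℝ) : ℝ≥0∞ :=
  ⨆ r ∈ Set.Icc (1 : ℝ) 2, ⨅ F : FaceIdx n k,
    (volume (faceNbhd k δ x r F))⁻¹ * ∫⁻ y in faceNbhd k δ x r F, (‖f y‖₊ : ℝ≥0∞)

/-- `L^p` norm of an `ℝ≥0∞`-valued function. -/
def lpNormE {α : Type*} [MeasurableSpace α] (g : α → ℝ≥0∞) (p : ℝ) (μ : Measure α) : ℝ≥0∞ :=
  (∫⁻ x, g x ^ p ∂μ) ^ (1 / p)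

/-- The measure `w(x) dx` associated to a weight `w`. -/
def wMeasure {n : ℕ} (w : (Fin n → ℝ) → ℝ) : Measure (Fin n → ℝ) :=
  volume.withDensity fun x => ENNReal.ofReal (w x)

/-- Average of `g` over the set `A` (with respect to Lebesgue measure). -/
def ravg {n : ℕ} (A : Set (Fin n → ℝ)) (g : (Fin n → ℝ) → ℝ) : ℝ :=
  (volume A).toReal⁻¹ * ∫ y in A, g y

/-- The axis-parallel cube with center `c` and side length `s`. -/
def cube {n : ℕ} (c : Fin n → ℝ) (s : ℝ) : Set (Fin n → ℝ) :=
  {y | ∀ j, |y j - c j| ≤ s / 2}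

/-- The closed unit cube `Q_z` with lower-left vertex `z`. -/
def unitCube {n : ℕ} (z : Fin n → ℤ) : Set (Fin n → ℝ) :=
  {y | ∀ j, (z j : ℝ) ≤ y j ∧ y j ≤ (z j : ℝ) + 1}

/-- The cube `7 Q_z`: same center as `Q_z`, side length `7`. -/
def sevenCube {n : ℕ} (z : Fin n → ℤ) : Set (Fin n → ℝ) :=
  {y | ∀ j, |y j - ((z j : ℝ) + 1 / 2)| ≤ 7 / 2}

/-- The (half-open) grid cell `Q_z(m)` of side length `δ = 1/N` inside `Q_z`. -/
def gridCell {n : ℕ} (N : ℕ) (z : Fin n → ℤ) (m : Fin n → Fin N) : Set (Fin n → ℝ) :=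
  {y | ∀ j, (z j : ℝ) + (m j : ℝ) / N ≤ y j ∧ y j < (z j : ℝ) + ((m j : ℝ) + 1) / N}

/-- The center `x_m` of the grid cell `Q_z(m)`. -/
def gridCenter {n : ℕ} (N : ℕ) (z : Fin n → ℤ) (m : Fin n → Fin N) : Fin n → ℝ :=
  fun j => (z j : ℝ) + ((m j : ℝ) + 1 / 2) / N

/-- Membership in `Γ`: a radius function with values in `[1,2] ∩ δ ℤ`, `δ = 1/N`. -/
def inGamma {n : ℕ} (N : ℕ) (ρ : (Fin n → Fin N) → ℝ) : Prop :=
  ∀ m, ρ m ∈ Set.Icc (1 : ℝ) 2 ∧ ∃ t : ℤ, ρ m = (t : ℝ) / N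

/-- The `δ'`-neighborhood `ℓ_m` of the selected `k`-face of the skeleton
`S_k(x_m, ρ(x_m))`. -/
def selFace {n : ℕ} (k N : ℕ) (z : Fin n → ℤ) (ρ : (Fin n → Fin N) → ℝ)
    (sel : (Fin n → Fin N) → FaceIdx n k) (δ' : ℝ) (m : Fin n → Fin N) : Set (Fin n → ℝ) :=
  Metric.cthickening δ' (kFace k (gridCenter N z m) (ρ m) (sel m))

/-- The linearized `k`-skeleton maximal operator: on the cell `Q_z(m)` it equals the
average of `f` over the `δ'`-neighborhood of the selected face. -/
def linMax {n : ℕ} (k N : ℕ) (z : Fin n → ℤ) (ρ : (Fin n → Fin N) → ℝ)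
    (sel : (Fin n → Fin N) → FaceIdx n k) (δ' : ℝ) (f : (Fin n → ℝ) → ℝ)
    (x : Fin n → ℝ) : ℝ :=
  ∑ m : Fin n → Fin N, Set.indicator (gridCell N z m)
    (fun _ => (volume (selFace k N z ρ sel δ' m)).toReal⁻¹ *
      ∫ y in selFace k N z ρ sel δ' m, f y) x

/-- The local skeleton `A_p` constant `[w]_{A^{S_k}_{p,ρ,z}}` (for `1 < p < ∞`). -/
def ApLoc {n : ℕ} (k N : ℕ) (z : Fin n → ℤ) (ρ : (Fin n → Fin N) → ℝ)
    (sel : (Fin n → Fin N) → FaceIdx n k) (w : (Fin n → ℝ) → ℝ) (p : ℝ) : ℝ≥0∞ :=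
  ⨆ m : Fin n → Fin N,
    ((volume (selFace k N z ρ sel ((N : ℝ)⁻¹) m))⁻¹ *
        ∫⁻ y in gridCell N z m, ENNReal.ofReal (w y)) *
      ((volume (selFace k N z ρ sel ((N : ℝ)⁻¹) m))⁻¹ *
        ∫⁻ y in selFace k N z ρ sel ((N : ℝ)⁻¹) m,
          ENNReal.ofReal (w y) ^ (1 - p / (p - 1))) ^ (p - 1)

/-- The local skeleton `A_1` constant `[w]_{A^{S_k}_{1,ρ,z}}`. -/
def A1Loc {n : ℕ} (k N : ℕ) (z : Fin n → ℤ) (ρ : (Fin n → Fin N) → ℝ)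
    (sel : (Fin n → Fin N) → FaceIdx n k) (w : (Fin n → ℝ) → ℝ) : ℝ≥0∞ :=
  ⨆ m : Fin n → Fin N,
    ((volume (selFace k N z ρ sel ((N : ℝ)⁻¹) m))⁻¹ *
        ∫⁻ y in gridCell N z m, ENNReal.ofReal (w y)) *
      essSup (fun y => (ENNReal.ofReal (w y))⁻¹)
        (volume.restrict (selFace k N z ρ sel ((N : ℝ)⁻¹) m))

/-- The global skeleton `A_p` constant `[w]_{A^{S_k}_p}` (with the `A_1` version at `p = 1`). -/
def ApGlobal {n : ℕ} (k N : ℕ)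
    (sel : (Fin n → ℤ) → ((Fin n → Fin N) → ℝ) → (Fin n → Fin N) → FaceIdx n k)
    (w : (Fin n → ℝ) → ℝ) (p : ℝ) : ℝ≥0∞ :=
  if p = 1 then
    ⨆ z : Fin n → ℤ, ⨆ ρ : {ρ : (Fin n → Fin N) → ℝ // inGamma N ρ},
      A1Loc k N z ρ.1 (sel z ρ.1) w
  else
    ⨆ z : Fin n → ℤ, ⨆ ρ : {ρ : (Fin n → Fin N) → ℝ // inGamma N ρ},
      ApLoc k N z ρ.1 (sel z ρ.1) w p

theorem rpow_dual_rpow_mul_self {a p : ℝ} (ha : 0 ≤ a) (hp : 1 < p) :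
    (a ^ (-(p / (p - 1)) / p)) ^ p * a = a ^ (-(p / (p - 1)) / p) := by
  rcases ha.eq_or_lt with rfl | ha
  · rw [mul_zero]
    refine (Real.zero_rpow ?_).symm
    have : 0 < p / (p - 1) := div_pos (by linarith) (by linarith)
    exact div_ne_zero (by linarith) (by linarith)
  · rw [← Real.rpow_mul ha.le, ← Real.rpow_add_one ha.ne']
    have : p - 1 ≠ 0 := by linarith
    congr 1
    field_simp
    ring

theorem inv_mul_mul_mul_inv_le {v W M T B : ℝ} (hB : 0 ≤ B) (hT : 0 ≤ T)
    (h : 0 < T → W * M ≤ B * T) : v⁻¹ * W * M * (v⁻¹ * T)⁻¹ ≤ B := by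
  rcases eq_or_ne v 0 with rfl | hv
  · simpa using hB
  rcases hT.eq_or_lt with rfl | hT
  · simpa using hB
  rw [mul_inv, inv_inv, show v⁻¹ * W * M * (v * T⁻¹) = W * M / T by field_simp]
  exact (div_le_iff₀ hT).2 (h hT)

theorem mul_rpow_le_of_ofReal_le {a b c W T p : ℝ} (ha : 0 ≤ a) (hc : 0 < c) (hT : 0 ≤ T)
    (hp : 0 ≤ p)
    (h : (ENNReal.ofReal a / ENNReal.ofReal c) ^ p * ENNReal.ofReal W ≤
      ENNReal.ofReal b ^ p * ENNReal.ofReal T) :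
    W * a ^ p ≤ c ^ p * max b 0 ^ p * T := by
  have hb : ENNReal.ofReal b = ENNReal.ofReal (max b 0) := by simp
  rw [← ENNReal.ofReal_div_of_pos hc, hb, ENNReal.ofReal_rpow_of_nonneg (by positivity) hp,
    ENNReal.ofReal_rpow_of_nonneg (le_max_right _ _) hp, ← ENNReal.ofReal_mul (by positivity),
    ← ENNReal.ofReal_mul (by positivity), ENNReal.ofReal_le_ofReal_iff (by positivity),
    Real.div_rpow ha hc.le, div_mul_eq_mul_div, div_le_iff₀ (by positivity)] at h
  linarith

theorem rpow_mul_measure_le_lpNormE_rpow {α : Type*} [MeasurableSpace α] {μ : Measure α}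
    {g : α → ℝ≥0∞} {p : ℝ} (hp : 0 < p) {Q : Set α} (hQ : MeasurableSet Q) {c : ℝ≥0∞}
    (hc : ∀ y ∈ Q, c ≤ g y) : c ^ p * μ Q ≤ lpNormE g p μ ^ p := by
  rw [lpNormE, ← ENNReal.rpow_mul, one_div_mul_cancel hp.ne', ENNReal.rpow_one,
    ← setLIntegral_const]
  exact (setLIntegral_mono' hQ fun y hy => ENNReal.rpow_le_rpow (hc y hy) hp.le).trans
    (setLIntegral_le_lintegral _ _)

section

variable {n k : ℕ}

def faceLower (x : Fin n → ℝ) (r : ℝ) (F : FaceIdx n k) : Fin n → ℝ :=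
  fun i => if i ∈ F.1.1 then x i - r else x i + (if F.2 i then r else -r)

def faceUpper (x : Fin n → ℝ) (r : ℝ) (F : FaceIdx n k) : Fin n → ℝ :=
  fun i => if i ∈ F.1.1 then x i + r else x i + (if F.2 i then r else -r)

theorem kFace_eq_Icc (x : Fin n → ℝ) (r : ℝ) (F : FaceIdx n k) :
    kFace k x r F = Icc (faceLower x r F) (faceUpper x r F) := by
  ext y
  simp only [kFace, mem_ofPred_eq, mem_Icc, Pi.le_def, faceLower, faceUpper, abs_sub_le_iff]
  constructor
  · rintro ⟨hfree, hfixed⟩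
    refine ⟨fun i => ?_, fun i => ?_⟩ <;> by_cases hi : i ∈ F.1.1
    · simp only [hi, if_true]; linarith [hfree i hi]
    · simp only [hi, if_false]; linarith [hfixed i hi]
    · simp only [hi, if_true]; linarith [hfree i hi]
    · simp only [hi, if_false]; linarith [hfixed i hi]
  · rintro ⟨hlo, hhi⟩
    refine ⟨fun i hi => ?_, fun i hi => ?_⟩
    · have := hlo i; have := hhi i; simp only [hi, if_true] at *; constructor <;> linarith
    · have := hlo i; have := hhi i; simp only [hi, if_false] at *; linarith

theorem faceLower_le_faceUpper {r : ℝ} (hr : 0 ≤ r) (x : Fin n → ℝ) (F : FaceIdx n k) :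
    faceLower x r F ≤ faceUpper x r F := fun i => by
  by_cases hi : i ∈ F.1.1 <;> simp only [faceLower, faceUpper, hi, if_true, if_false] <;> linarith

theorem cthickening_Icc_pi {ι : Type*} [Fintype ι] {a b : ι → ℝ} (hab : a ≤ b) {δ : ℝ}
    (hδ : 0 ≤ δ) : cthickening δ (Icc a b) = Icc (fun i => a i - δ) (fun i => b i + δ) := by
  ext y
  simp only [isCompact_Icc.cthickening_eq_biUnion_closedBall hδ, mem_iUnion₂, mem_closedBall,
    dist_pi_le_iff hδ, Real.dist_eq, abs_sub_le_iff, mem_Icc, Pi.le_def, exists_prop]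
  constructor
  · rintro ⟨z, ⟨hza, hzb⟩, hyz⟩
    exact ⟨fun i => by linarith [hza i, (hyz i).2], fun i => by linarith [hzb i, (hyz i).1]⟩
  · rintro ⟨hya, hyb⟩
    refine ⟨fun i => max (a i) (min (y i) (b i)),
      ⟨fun i => le_max_left _ _, fun i => max_le (hab i) (min_le_right _ _)⟩, fun i => ?_⟩
    have := hya i; have := hyb i; have := hab i
    rcases le_total (a i) (min (y i) (b i)) with h | h <;>
      simp only [max_eq_left, max_eq_right, h] <;> rcases min_cases (y i) (b i) with h' | h' <;>
      constructor <;> linarith [h'.1]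

theorem volume_faceNbhd {δ r : ℝ} (hδ : 0 ≤ δ) (hr : 0 ≤ r) (x : Fin n → ℝ) (F : FaceIdx n k) :
    volume (faceNbhd k δ x r F) = ENNReal.ofReal ((2 * r + 2 * δ) ^ k * (2 * δ) ^ (n - k)) := by
  rw [faceNbhd, kFace_eq_Icc, cthickening_Icc_pi (faceLower_le_faceUpper hr x F) hδ,
    Real.volume_Icc_pi, ← ENNReal.ofReal_prod_of_nonneg]
  · congr 1
    have hlen : ∀ i, faceUpper x r F i + δ - (faceLower x r F i - δ) =
        if i ∈ F.1.1 then 2 * r + 2 * δ else 2 * δ := fun i => by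
      by_cases hi : i ∈ F.1.1 <;> simp only [faceLower, faceUpper, hi, if_true, if_false] <;> ring
    simp only [hlen, Finset.prod_ite, Finset.prod_const, Finset.filter_mem_eq_inter,
      Finset.univ_inter, F.1.2, Finset.filter_not, Finset.card_sdiff, Finset.inter_univ,
      Finset.card_univ, Fintype.card_fin]
  · intro i _
    linarith [faceLower_le_faceUpper hr x F i]

theorem measurableSet_faceNbhd {δ r : ℝ} {x : Fin n → ℝ} {F : FaceIdx n k} :
    MeasurableSet (faceNbhd k δ x r F) :=
  isClosed_cthickening.measurableSet

theorem measurableSet_skelNbhd {δ r : ℝ} {x : Fin n → ℝ} : MeasurableSet (skelNbhd k δ x r) :=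
  .iUnion fun _ => measurableSet_faceNbhd

theorem kFace_subset_cthickening {x y : Fin n → ℝ} {d : ℝ} (hxy : dist x y ≤ d) (r : ℝ)
    (F : FaceIdx n k) : kFace k x r F ⊆ cthickening d (kFace k y r F) := by
  intro z hz
  refine mem_cthickening_of_dist_le z (z + (y - x)) d _ ?_ ?_
  · refine ⟨fun i hi => ?_, fun i hi => ?_⟩
    · simpa only [Pi.add_apply, Pi.sub_apply, show z i + (y i - x i) - y i = z i - x i by ring]
        using hz.1 i hi
    · simp only [Pi.add_apply, Pi.sub_apply, hz.2 i hi]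
      ring
  · rwa [dist_self_add_right, ← dist_eq_norm']

theorem faceNbhd_subset_faceNbhd {x y : Fin n → ℝ} {δ d : ℝ} (hδ : 0 ≤ δ) (hd : 0 ≤ d)
    (hxy : dist x y ≤ d) (r : ℝ) (F : FaceIdx n k) :
    faceNbhd k δ x r F ⊆ faceNbhd k (δ + d) y r F :=
  (cthickening_subset_of_subset δ (kFace_subset_cthickening hxy r F)).trans
    (cthickening_cthickening_subset hδ hd _)

theorem volume_faceNbhd_le_mul {c δ r : ℝ} (hc : 1 ≤ c) (hδ : 0 ≤ δ) (hr : 0 ≤ r)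
    (x y : Fin n → ℝ) (F : FaceIdx n k) :
    volume (faceNbhd k (c * δ) y r F) ≤ ENNReal.ofReal (c ^ n) * volume (faceNbhd k δ x r F) := by
  have hkn : k ≤ n := by simpa [F.1.2] using Finset.card_le_univ F.1.1
  rw [volume_faceNbhd (by positivity) hr, volume_faceNbhd hδ hr,
    ← ENNReal.ofReal_mul (by positivity), ← pow_mul_pow_sub c hkn]
  refine ENNReal.ofReal_le_ofReal ?_
  calc (2 * r + 2 * (c * δ)) ^ k * (2 * (c * δ)) ^ (n - k)
      ≤ (c * (2 * r + 2 * δ)) ^ k * (c * (2 * δ)) ^ (n - k) := by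
        gcongr ?_ ^ k * ?_ ^ (n - k)
        · nlinarith
        · exact le_of_eq (by ring)
    _ = c ^ k * c ^ (n - k) * ((2 * r + 2 * δ) ^ k * (2 * δ) ^ (n - k)) := by
        rw [mul_pow, mul_pow]
        ring

theorem cube_eq_closedBall (x : Fin n → ℝ) {s : ℝ} (hs : 0 ≤ s) :
    cube x s = closedBall x (s / 2) := by
  ext y
  simp only [cube, mem_ofPred_eq, mem_closedBall, dist_pi_le_iff (by positivity : 0 ≤ s / 2),
    Real.dist_eq]

theorem le_skelMax {c δ r : ℝ} (hc : 1 ≤ c) (hδ : 0 < δ) (hr : r ∈ Icc (1 : ℝ) 2)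
    {x y : Fin n → ℝ} (hxy : dist x y ≤ (c - 1) * δ) (f : (Fin n → ℝ) → ℝ) :
    (⨅ F, ⨍⁻ z in faceNbhd k δ x r F, ‖f z‖ₑ ∂volume) / ENNReal.ofReal (c ^ n) ≤
      skelMax n k (c * δ) f y := by
  refine le_trans ?_ (le_iSup₂ (f := fun r _ => ⨅ F : FaceIdx n k,
    (volume (faceNbhd k (c * δ) y r F))⁻¹ * ∫⁻ z in faceNbhd k (c * δ) y r F, ‖f z‖ₑ) r hr)
  refine le_iInf fun F => ?_
  have hsub : faceNbhd k δ x r F ⊆ faceNbhd k (c * δ) y r F := by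
    rw [show c * δ = δ + (c - 1) * δ by ring]
    exact faceNbhd_subset_faceNbhd hδ.le (by nlinarith) hxy r F
  have hvol := volume_faceNbhd_le_mul (r := r) hc hδ.le (by linarith [hr.1]) x y F
  have hc0 : ENNReal.ofReal (c ^ n) ≠ 0 := by simp; positivity
  calc (⨅ F, ⨍⁻ z in faceNbhd k δ x r F, ‖f z‖ₑ ∂volume) / ENNReal.ofReal (c ^ n)
      ≤ (⨍⁻ z in faceNbhd k δ x r F, ‖f z‖ₑ ∂volume) / ENNReal.ofReal (c ^ n) := by
        gcongr
        exact iInf_le _ F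
    _ = (ENNReal.ofReal (c ^ n) * volume (faceNbhd k δ x r F))⁻¹ *
          ∫⁻ z in faceNbhd k δ x r F, ‖f z‖ₑ := by
        rw [setLAverage_eq, ENNReal.mul_inv (Or.inl hc0) (Or.inl ENNReal.ofReal_ne_top),
          ENNReal.div_eq_inv_mul, ENNReal.div_eq_inv_mul, mul_assoc]
    _ ≤ (volume (faceNbhd k (c * δ) y r F))⁻¹ * ∫⁻ z in faceNbhd k (c * δ) y r F, ‖f z‖ₑ := by
        gcongr

theorem ravg_eq_setAverage (A : Set (Fin n → ℝ)) (g : (Fin n → ℝ) → ℝ) :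
    ravg A g = ⨍ y in A, g y := by
  rw [ravg, setAverage_eq, smul_eq_mul, measureReal_def]

theorem ofReal_ravg_eq_setLAverage_indicator {A S : Set (Fin n → ℝ)}
    (hA : MeasurableSet A) (hAS : A ⊆ S) {g : (Fin n → ℝ) → ℝ} (hg : IntegrableOn g A)
    (hg0 : ∀ y, 0 ≤ g y) :
    ENNReal.ofReal (ravg A g) = ⨍⁻ y in A, ‖S.indicator g y‖ₑ ∂volume := by
  rw [ravg_eq_setAverage, ofReal_setAverage hg (ae_of_all _ hg0), setLAverage_eq,
    setLIntegral_congr_fun hA fun y hy =>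
      (by rw [indicator_of_mem (hAS hy), Real.enorm_eq_ofReal (hg0 y)] :
        ENNReal.ofReal (g y) = ‖S.indicator g y‖ₑ)]

theorem ofReal_iInf_ravg_div_le_skelMax {δ r : ℝ} (hδ : 0 < δ)
    (hr : r ∈ Icc (1 : ℝ) 2) {x y : Fin n → ℝ} (hxy : dist x y ≤ 3 * δ) {g : (Fin n → ℝ) → ℝ}
    (hg : IntegrableOn g (skelNbhd k δ x r)) (hg0 : ∀ y, 0 ≤ g y) :
    ENNReal.ofReal (⨅ F, ravg (faceNbhd k δ x r F) g) / ENNReal.ofReal (4 ^ n) ≤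
      skelMax n k (4 * δ) ((skelNbhd k δ x r).indicator g) y := by
  refine le_trans ?_ (le_skelMax (by norm_num) hδ hr (by linarith) _)
  gcongr
  refine le_iInf fun F => ?_
  have hsub : faceNbhd k δ x r F ⊆ skelNbhd k δ x r := subset_iUnion (faceNbhd k δ x r ·) F
  rw [← ofReal_ravg_eq_setLAverage_indicator measurableSet_faceNbhd hsub
    (hg.mono_set hsub) hg0]
  exact ENNReal.ofReal_le_ofReal (ciInf_le (Finite.bddBelow_range _) F)

theorem eLpNorm_rpow_wMeasure {w f : (Fin n → ℝ) → ℝ} (hw : AEMeasurable w)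
    (hf : AEMeasurable f) {p : ℝ} (hp : 0 < p) :
    eLpNorm f (ENNReal.ofReal p) (wMeasure w) ^ p =
      ∫⁻ y, ENNReal.ofReal (w y) * ‖f y‖ₑ ^ p := by
  rw [eLpNorm_eq_lintegral_rpow_enorm_toReal (by simpa using hp) ENNReal.ofReal_ne_top,
    ENNReal.toReal_ofReal hp.le, ← ENNReal.rpow_mul, one_div_mul_cancel hp.ne', ENNReal.rpow_one,
    wMeasure, lintegral_withDensity_eq_lintegral_mul₀ hw.ennreal_ofReal (hf.enorm.pow_const p)]
  rfl

theorem eLpNorm_indicator_dual_rpow_wMeasure {w : (Fin n → ℝ) → ℝ} (hw0 : ∀ y, 0 ≤ w y)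
    (hw : AEMeasurable w) {p : ℝ} (hp : 1 < p) {S : Set (Fin n → ℝ)} (hS : MeasurableSet S) :
    eLpNorm (S.indicator fun y => w y ^ (-(p / (p - 1)) / p)) (ENNReal.ofReal p) (wMeasure w) ^ p
      = ∫⁻ y in S, ENNReal.ofReal (w y ^ (-(p / (p - 1)) / p)) := by
  rw [eLpNorm_rpow_wMeasure hw ((hw.pow_const _).indicator hS) (by linarith),
    ← lintegral_indicator hS]
  refine lintegral_congr fun y => ?_
  by_cases hy : y ∈ S
  · have hv0 : 0 ≤ w y ^ (-(p / (p - 1)) / p) := Real.rpow_nonneg (hw0 y) _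
    rw [indicator_of_mem hy, indicator_of_mem hy, Real.enorm_eq_ofReal hv0,
      ENNReal.ofReal_rpow_of_nonneg hv0 (by linarith), ← ENNReal.ofReal_mul (hw0 y), mul_comm,
      rpow_dual_rpow_mul_self (hw0 y) hp]
  · simp [indicator_of_notMem hy, ENNReal.zero_rpow_of_pos (by linarith : 0 < p)]

end

/-- if `M_{4δ}` is bounded on `L^p(w)` in `ℝ²`, then `w` satisfies the
skeleton `𝒜^S_p` condition at scale `δ`. -/
theorem necessary_condition (δ p : ℝ) (hδ : δ ∈ Set.Ioo (0 : ℝ) 1) (hp : 1 < p)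
    (w : (Fin 2 → ℝ) → ℝ) (hw0 : ∀ x, 0 ≤ w x) (hw : LocallyIntegrable w volume)
    (C : ℝ)
    (hbdd : ∀ f : (Fin 2 → ℝ) → ℝ,
      lpNormE (skelMax 2 1 (4 * δ) f) p (wMeasure w) ≤
        ENNReal.ofReal C * eLpNorm f (ENNReal.ofReal p) (wMeasure w)) :
    ∃ B : ℝ, ∀ (x : Fin 2 → ℝ) (r : ℝ), r ∈ Set.Icc (1 : ℝ) 2 →
      ((volume (skelNbhd 1 δ x r)).toReal⁻¹ * ∫ y in cube x δ, w y) *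
          (⨅ F : FaceIdx 2 1,
            ravg (faceNbhd 1 δ x r F) fun y => w y ^ (-(p / (p - 1)) / p)) ^ p *
          (ravg (skelNbhd 1 δ x r) fun y => w y ^ (-(p / (p - 1)) / p))⁻¹ ≤ B := by
  have hp0 : 0 < p := by linarith
  have hwm : AEMeasurable w := hw.aestronglyMeasurable.aemeasurable
  refine ⟨(4 ^ 2) ^ p * max C 0 ^ p, fun x r hr => ?_⟩
  set σ := fun y => w y ^ (-(p / (p - 1)) / p)
  have hσ0 : ∀ y, 0 ≤ σ y := fun y => Real.rpow_nonneg (hw0 y) _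
  set S := skelNbhd 1 δ x r
  set m := ⨅ F : FaceIdx 2 1, ravg (faceNbhd 1 δ x r F) σ
  have hm0 : 0 ≤ m := Real.iInf_nonneg fun F =>
    mul_nonneg (inv_nonneg.2 ENNReal.toReal_nonneg) (integral_nonneg hσ0)
  rw [cube_eq_closedBall x hδ.1.le]
  refine inv_mul_mul_mul_inv_le (by positivity) (integral_nonneg hσ0) fun hT => ?_
  have hσS : IntegrableOn σ S := by
    by_contra h
    exact hT.ne' (integral_undef h)
  have hpt : ∀ y ∈ closedBall x (δ / 2),
      ENNReal.ofReal m / ENNReal.ofReal (4 ^ 2) ≤ skelMax 2 1 (4 * δ) (S.indicator σ) y :=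
    fun y hy => ofReal_iInf_ravg_div_le_skelMax hδ.1 hr
      (by rw [dist_comm]; linarith [mem_closedBall.1 hy, hδ.1]) hσS hσ0
  have key := (rpow_mul_measure_le_lpNormE_rpow hp0 measurableSet_closedBall hpt).trans
    (ENNReal.rpow_le_rpow (hbdd _) hp0.le)
  rw [ENNReal.mul_rpow_of_nonneg _ _ hp0.le,
    eLpNorm_indicator_dual_rpow_wMeasure hw0 hwm hp measurableSet_skelNbhd, wMeasure,
    withDensity_apply _ measurableSet_closedBall,
    ← ofReal_integral_eq_lintegral_ofReal (hw.integrableOn_isCompact (isCompact_closedBall _ _))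
      (ae_of_all _ hw0),
    ← ofReal_integral_eq_lintegral_ofReal hσS (ae_of_all _ hσ0)] at key
  exact mul_rpow_le_of_ofReal_le hm0 (by norm_num) hT.le hp0.le key
end
end

section
/- Let w be a weight on ℝ² with [w]_{A^S_1} < ∞. Then lim_{p→1⁺} [w]_{A^S_p} = [w]_{A^S_1}. -/
open MeasureTheory Metric Set
open scoped ENNReal NNReal

noncomputable section

/-!
For `p > 1` the second factor of the local `A_p` constant on a cell is the `L^{1/(p-1)}` norm of
`w⁻¹` for normalized Lebesgue measure on the face neighbourhood `ℓ`, and the `A_1` constant uses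
its `L^∞` norm instead. On a probability space the `L^q` norms lie below the `L^∞` norm and, by
Chebyshev–Markov, converge to it as `q → ∞`. The convergence survives multiplication by the cell
factors and suprema over all cells, radius functions and unit squares, and `q = 1/(p-1) → ∞`
as `p ↓ 1`.
-/

open Filter
open scoped Topology ProbabilityTheory

lemma ENNReal.tendsto_rpow_one_div_atTop {a : ℝ≥0∞} (h0 : a ≠ 0) (htop : a ≠ ∞) :
    Tendsto (fun q : ℝ => a ^ (1 / q)) atTop (𝓝 1) := by
  lift a to ℝ≥0 using htop
  have h0' : a ≠ 0 := by exact_mod_cast h0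
  have hexp : Tendsto (fun q : ℝ => 1 / q) atTop (𝓝 0) := by
    simpa only [one_div] using tendsto_inv_atTop_zero
  have := (tendsto_const_nhds (x := a)).nnrpow hexp (Or.inl h0')
  simp only [NNReal.rpow_zero] at this
  simpa [ENNReal.coe_rpow_of_ne_zero h0'] using (ENNReal.tendsto_coe.2 this)

namespace MeasureTheory

variable {α ε : Type*} {m : MeasurableSpace α} {μ : Measure α} [TopologicalSpace ε]
  [ContinuousENorm ε]

lemma mul_meas_rpow_le_eLpNorm' {f : α → ε} (hf : AEStronglyMeasurable f μ) {q : ℝ} (hq : 0 < q)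
    (c : ℝ≥0∞) : c * μ {x | c ≤ ‖f x‖ₑ} ^ (1 / q) ≤ eLpNorm' f q μ := by
  have hmarkov := mul_meas_ge_le_lintegral₀ (hf.enorm.pow_const q) (c ^ q)
  have hset : {x | c ^ q ≤ ‖f x‖ₑ ^ q} = {x | c ≤ ‖f x‖ₑ} := by
    ext x; exact ENNReal.rpow_le_rpow_iff hq
  rw [hset] at hmarkov
  calc c * μ {x | c ≤ ‖f x‖ₑ} ^ (1 / q) = (c ^ q * μ {x | c ≤ ‖f x‖ₑ}) ^ (1 / q) := by
        rw [ENNReal.mul_rpow_of_nonneg _ _ (by positivity), ← ENNReal.rpow_mul,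
          mul_one_div_cancel hq.ne', ENNReal.rpow_one]
    _ ≤ eLpNorm' f q μ := by
        rw [eLpNorm']
        gcongr

lemma tendsto_eLpNorm'_atTop [IsProbabilityMeasure μ] {f : α → ε} (hf : AEStronglyMeasurable f μ) :
    Tendsto (fun q => eLpNorm' f q μ) atTop (𝓝 (eLpNormEssSup f μ)) := by
  refine tendsto_order.2 ⟨fun c hc => ?_, fun c hc => ?_⟩
  · obtain ⟨b, hcb, hb⟩ := exists_between hc
    set E := {x | b ≤ ‖f x‖ₑ}
    have hE0 : μ E ≠ 0 := by
      intro h0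
      have hbound : ∀ᵐ x ∂μ, ‖f x‖ₑ ≤ b := by
        filter_upwards [measure_eq_zero_iff_ae_notMem.1 h0] with x hx
        exact (not_le.1 hx).le
      exact (eLpNormEssSup_le_of_ae_enorm_bound hbound).not_gt hb
    have hlim : Tendsto (fun q : ℝ => b * μ E ^ (1 / q)) atTop (𝓝 b) := by
      simpa using ENNReal.Tendsto.const_mul
        (ENNReal.tendsto_rpow_one_div_atTop hE0 (measure_ne_top μ E)) (Or.inl one_ne_zero)
    filter_upwards [(tendsto_order.1 hlim).1 c hcb, eventually_gt_atTop 0] with q hq hq0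
    exact hq.trans_le (mul_meas_rpow_le_eLpNorm' hf hq0 b)
  · filter_upwards [eventually_gt_atTop 0] with q hq
    exact (eLpNorm'_le_eLpNormEssSup hq).trans_lt hc

lemma tendsto_iSup_mul_eLpNorm'_atTop {ι : Type*} (a : ι → ℝ≥0∞) {μ : ι → Measure α}
    [∀ i, IsProbabilityMeasure (μ i)] {f : ι → α → ε}
    (hf : ∀ i, AEStronglyMeasurable (f i) (μ i)) :
    Tendsto (fun q => ⨆ i, a i * eLpNorm' (f i) q (μ i)) atTop
      (𝓝 (⨆ i, a i * eLpNormEssSup (f i) (μ i))) := by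
  refine tendsto_order.2 ⟨fun c hc => ?_, fun c hc => ?_⟩
  · obtain ⟨i, hi⟩ := lt_iSup_iff.1 hc
    have hne : eLpNormEssSup (f i) (μ i) ≠ 0 := by
      rintro h
      simp [h] at hi
    have hlim := ENNReal.Tendsto.const_mul (a := a i) (tendsto_eLpNorm'_atTop (hf i)) (Or.inl hne)
    filter_upwards [(tendsto_order.1 hlim).1 c hi] with q hq
    exact hq.trans_le (le_iSup (fun i => a i * eLpNorm' (f i) q (μ i)) i)
  · filter_upwards [eventually_gt_atTop 0] with q hq
    refine lt_of_le_of_lt (iSup_mono fun i => ?_) hc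
    gcongr
    exact eLpNorm'_le_eLpNormEssSup hq

end MeasureTheory

section

variable {n k N : ℕ}

lemma kFace_nonempty (x : Fin n → ℝ) {r : ℝ} (hr : 0 ≤ r) (F : FaceIdx n k) :
    (kFace k x r F).Nonempty := by
  refine ⟨fun i => if i ∈ F.1.1 then x i else x i + (if F.2 i then r else -r), ?_, ?_⟩
  · intro i hi
    simpa [hi] using hr
  · intro i hi
    simp [hi]

lemma kFace_subset_closedBall (x : Fin n → ℝ) (r : ℝ) (F : FaceIdx n k) :
    kFace k x r F ⊆ closedBall x |r| := by
  intro y hy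
  rw [mem_closedBall, dist_pi_le_iff (abs_nonneg r)]
  intro i
  rw [Real.dist_eq]
  by_cases hi : i ∈ F.1.1
  · exact (hy.1 i hi).trans (le_abs_self r)
  · rw [hy.2 i hi, add_sub_cancel_left]
    split_ifs <;> simp

lemma volume_selFace_ne_top (z : Fin n → ℤ) (ρ : (Fin n → Fin N) → ℝ)
    (sel : (Fin n → Fin N) → FaceIdx n k) (δ : ℝ) (m : Fin n → Fin N) :
    volume (selFace k N z ρ sel δ m) ≠ ∞ :=
  ((isBounded_closedBall.subset (kFace_subset_closedBall _ _ _)).cthickening).measure_lt_top.ne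

lemma volume_selFace_ne_zero (z : Fin n → ℤ) (ρ : (Fin n → Fin N) → ℝ)
    (sel : (Fin n → Fin N) → FaceIdx n k) {δ : ℝ} (hδ : 0 < δ) (m : Fin n → Fin N)
    (hρ : 0 ≤ ρ m) : volume (selFace k N z ρ sel δ m) ≠ 0 := by
  obtain ⟨y, hy⟩ := kFace_nonempty (gridCenter N z m) hρ (sel m)
  refine (lt_of_lt_of_le ?_ (measure_mono (thickening_subset_cthickening _ _))).ne'
  exact isOpen_thickening.measure_pos volume ⟨y, self_subset_thickening hδ _ hy⟩

end

section

variable {n k N : ℕ} (z : Fin n → ℤ) (ρ : (Fin n → Fin N) → ℝ)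
  (sel : (Fin n → Fin N) → FaceIdx n k) (w : (Fin n → ℝ) → ℝ)

def cellRatio (m : Fin n → Fin N) : ℝ≥0∞ :=
  (volume (selFace k N z ρ sel (N : ℝ)⁻¹ m))⁻¹ * ∫⁻ y in gridCell N z m, ENNReal.ofReal (w y)

lemma ApLoc_eq_iSup_cellRatio_mul_eLpNorm' {p : ℝ} (hp : 1 < p) :
    ApLoc k N z ρ sel w p = ⨆ m, cellRatio z ρ sel w m *
      eLpNorm' (fun y => (ENNReal.ofReal (w y))⁻¹) (1 / (p - 1))
        volume[|selFace k N z ρ sel (N : ℝ)⁻¹ m] := by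
  have hexp : 1 - p / (p - 1) = -(1 / (p - 1)) := by
    field_simp [(sub_pos.2 hp).ne']
    ring
  refine iSup_congr fun m => ?_
  rw [eLpNorm', one_div_one_div, ProbabilityTheory.cond, lintegral_smul_measure]
  simp only [hexp, ENNReal.rpow_neg, ← ENNReal.inv_rpow, enorm_eq_self, smul_eq_mul]
  rfl

lemma A1Loc_eq_iSup_cellRatio_mul_eLpNormEssSup :
    A1Loc k N z ρ sel w = ⨆ m, cellRatio z ρ sel w m *
      eLpNormEssSup (fun y => (ENNReal.ofReal (w y))⁻¹)
        volume[|selFace k N z ρ sel (N : ℝ)⁻¹ m] := by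
  refine iSup_congr fun m => ?_
  rw [eLpNormEssSup, ProbabilityTheory.cond, essSup_ennreal_smul_measure
    (ENNReal.inv_ne_zero.2 (volume_selFace_ne_top z ρ sel _ m))]
  rfl

end

abbrev CellIdx (n N : ℕ) :=
  (Fin n → ℤ) × {ρ : (Fin n → Fin N) → ℝ // inGamma N ρ} × (Fin n → Fin N)

section

variable {n k N : ℕ} (sel : (Fin n → ℤ) → ((Fin n → Fin N) → ℝ) → (Fin n → Fin N) → FaceIdx n k)
  (w : (Fin n → ℝ) → ℝ)

def cellFace (i : CellIdx n N) : Set (Fin n → ℝ) :=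
  selFace k N i.1 i.2.1 (sel i.1 i.2.1) (N : ℝ)⁻¹ i.2.2

lemma isProbabilityMeasure_cond_cellFace (hN : 0 < N) (i : CellIdx n N) :
    IsProbabilityMeasure volume[|cellFace sel i] :=
  ProbabilityTheory.cond_isProbabilityMeasure_of_finite
    (volume_selFace_ne_zero _ _ _ (by positivity) _ (by linarith [(i.2.1.2 i.2.2).1.1]))
    (volume_selFace_ne_top _ _ _ _ _)

lemma ApGlobal_eq_iSup_cellRatio_mul_eLpNorm' {p : ℝ} (hp : 1 < p) :
    ApGlobal k N sel w p = ⨆ i : CellIdx n N, cellRatio i.1 i.2.1 (sel i.1 i.2.1) w i.2.2 *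
      eLpNorm' (fun y => (ENNReal.ofReal (w y))⁻¹) (1 / (p - 1)) volume[|cellFace sel i] := by
  simp only [ApGlobal, if_neg hp.ne', ApLoc_eq_iSup_cellRatio_mul_eLpNorm' _ _ _ _ hp,
    iSup_prod, cellFace]

lemma ApGlobal_one_eq_iSup_cellRatio_mul_eLpNormEssSup :
    ApGlobal k N sel w 1 = ⨆ i : CellIdx n N, cellRatio i.1 i.2.1 (sel i.1 i.2.1) w i.2.2 *
      eLpNormEssSup (fun y => (ENNReal.ofReal (w y))⁻¹) volume[|cellFace sel i] := by
  simp only [ApGlobal, if_true, A1Loc_eq_iSup_cellRatio_mul_eLpNormEssSup, iSup_prod, cellFace]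

end

lemma tendsto_one_div_sub_one_nhdsGT_one :
    Tendsto (fun p : ℝ => 1 / (p - 1)) (𝓝[>] 1) atTop := by
  have hsub : Tendsto (fun p : ℝ => p - 1) (𝓝[>] 1) (𝓝[>] 0) := by
    refine tendsto_nhdsWithin_of_tendsto_nhds_of_eventually_within _ ?_
      (eventually_nhdsWithin_of_forall fun p (hp : 1 < p) => sub_pos.2 hp)
    simpa using ((continuous_sub_right (1 : ℝ)).tendsto 1).mono_left nhdsWithin_le_nhds
  simpa only [one_div, Function.comp_def] using tendsto_inv_nhdsGT_zero.comp hsub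

theorem ApS_limit_general (N : ℕ) (hN : 1 < N) (w : (Fin 2 → ℝ) → ℝ)
    (hw : LocallyIntegrable w volume)
    (sel : (Fin 2 → ℤ) → ((Fin 2 → Fin N) → ℝ) → (Fin 2 → Fin N) → FaceIdx 2 1) :
    Filter.Tendsto (fun p => ApGlobal 1 N sel w p) (nhdsWithin 1 (Set.Ioi 1))
      (nhds (ApGlobal 1 N sel w 1)) := by
  have := isProbabilityMeasure_cond_cellFace sel (by omega)
  have hmeas (i : CellIdx 2 N) :
      AEStronglyMeasurable (fun y => (ENNReal.ofReal (w y))⁻¹) volume[|cellFace sel i] :=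
    (hw.aestronglyMeasurable.aemeasurable.ennreal_ofReal.inv.mono_ac
      ProbabilityTheory.cond_absolutelyContinuous).aestronglyMeasurable
  rw [ApGlobal_one_eq_iSup_cellRatio_mul_eLpNormEssSup]
  refine ((tendsto_iSup_mul_eLpNorm'_atTop _ hmeas).comp
    tendsto_one_div_sub_one_nhdsGT_one).congr' ?_
  filter_upwards [self_mem_nhdsWithin] with p (hp : 1 < p)
  exact (ApGlobal_eq_iSup_cellRatio_mul_eLpNorm' sel w hp).symm

/-- for `w ∈ A^S_1`, `[w]_{A^S_p} → [w]_{A^S_1}` as `p → 1⁺`. -/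
theorem ApS_limit (N : ℕ) (hN : 1 < N) (w : (Fin 2 → ℝ) → ℝ) (hw0 : ∀ x, 0 ≤ w x)
    (hw : LocallyIntegrable w volume)
    (sel : (Fin 2 → ℤ) → ((Fin 2 → Fin N) → ℝ) → (Fin 2 → Fin N) → FaceIdx 2 1)
    (h1 : ApGlobal 1 N sel w 1 ≠ ⊤) :
    Filter.Tendsto (fun p => ApGlobal 1 N sel w p) (nhdsWithin 1 (Set.Ioi 1))
      (nhds (ApGlobal 1 N sel w 1)) :=
  ApS_limit_general N hN w hw sel
end
end

section
/- Let 0 < δ < 1 with 1/δ ∈ ℕ, z ∈ ℤ², ρ ∈ Γ, and let 1 < p < ∞ with p' ∈ ℕ. Let w be a weight with [w]_{A^S_{p,ρ,z}} < ∞, and assume the side selection has the overlap property that each ℓ_i meets at most A·δ^{−5/4} of the sets ℓ_1,…,ℓ_u (as is guaranteed, with A an absolute constant, by the face-selection algorithm). Restrict to the indices i (say v of them, relabeled 1,…,v) whose selected side is vertical. Then for every choice of nonnegative numbers b_1,…,b_v with Σ_{i=1}^v b_i^{p'} = 1, setting t_i = (b_i/|ℓ_i|)·(∫_{Q_z(i)}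 w dx)^{1/p}, one has ‖Σ_{i=1}^v t_i·1_{ℓ_i}‖_{L^{p'}(7Q_z, w^{1−p'})} ≤ C·δ^{−5/(4p)}·[w]_{A^S_{p,ρ,z}}^{1/p}, where C depends only on A and p. -/
open MeasureTheory Metric Set
open scoped ENNReal NNReal

noncomputable section

/-!
At every point at most `K = A δ^{-5/4}` of the sets `ℓ_i` overlap, so Hölder's inequality on
those terms gives `(∑ t_i 1_{ℓ_i})^{p'} ≤ K^{p'-1} ∑ t_i^{p'} 1_{ℓ_i}`. Integrating against
`w^{1-p'}`, the `i`-th term `t_i^{p'} ∫_{ℓ_i} w^{1-p'}` is `b_i^{p'}` times the `i`-th quantity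
in `[w]_{A^S_{p,ρ,z}}` raised to `p' - 1 = 1/(p-1)`, hence at most `b_i^{p'} [w]^{p'-1}`.
Summing with `∑ b_i^{p'} = 1` and taking `p'`-th roots leaves `K^{1/p} [w]^{1/p}`, since
`(p' - 1)/p' = 1/p`.
-/

section Overlap

open Finset
open scoped Classical

variable {α ι : Type*} [Finite ι]

theorem card_filter_mem_le_ncard_inter_nonempty (S : Finset ι) (ℓ : ι → Set α) {y : α} {i : ι}
    (hy : y ∈ ℓ i) : #{j ∈ S | y ∈ ℓ j} ≤ {j | (ℓ i ∩ ℓ j).Nonempty}.ncard := by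
  rw [← Set.ncard_coe_finset]
  refine Set.ncard_le_ncard (fun j hj => ?_)
  rw [coe_filter] at hj
  exact ⟨y, hy, hj.2⟩

variable {S : Finset ι} {ℓ : ι → Set α} {K : ℝ≥0∞} {q : ℝ}

theorem rpow_sum_indicator_le_of_overlap (hq : 1 ≤ q)
    (hK : ∀ i, ({j | (ℓ i ∩ ℓ j).Nonempty}.ncard : ℝ≥0∞) ≤ K) (c : ι → ℝ≥0∞) (y : α) :
    (∑ i ∈ S, (ℓ i).indicator (fun _ => c i) y) ^ q ≤
      K ^ (q - 1) * ∑ i ∈ S, (ℓ i).indicator (fun _ => c i ^ q) y := by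
  simp only [indicator_apply, ← sum_filter]
  rcases (S.filter (y ∈ ℓ ·)).eq_empty_or_nonempty with hempty | ⟨i, hi⟩
  · simp [hempty, ENNReal.zero_rpow_of_pos (by linarith : 0 < q)]
  have hcard : (#{j ∈ S | y ∈ ℓ j} : ℝ≥0∞) ≤ K :=
    le_trans (by exact_mod_cast card_filter_mem_le_ncard_inter_nonempty S ℓ (mem_filter.1 hi).2)
      (hK i)
  calc (∑ i ∈ S with y ∈ ℓ i, c i) ^ q
      ≤ (#{j ∈ S | y ∈ ℓ j} : ℝ≥0∞) ^ (q - 1) * ∑ i ∈ S with y ∈ ℓ i, c i ^ q :=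
        ENNReal.rpow_sum_le_const_mul_sum_rpow _ _ hq
    _ ≤ K ^ (q - 1) * ∑ i ∈ S with y ∈ ℓ i, c i ^ q := by
        gcongr

variable [MeasurableSpace α]

theorem lintegral_rpow_sum_indicator_le_of_overlap (μ : Measure α) (hq : 1 ≤ q)
    (hℓ : ∀ i, MeasurableSet (ℓ i)) (hK : ∀ i, ({j | (ℓ i ∩ ℓ j).Nonempty}.ncard : ℝ≥0∞) ≤ K)
    (c : ι → ℝ≥0∞) :
    ∫⁻ y, (∑ i ∈ S, (ℓ i).indicator (fun _ => c i) y) ^ q ∂μ ≤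
      K ^ (q - 1) * ∑ i ∈ S, c i ^ q * μ (ℓ i) := by
  calc ∫⁻ y, (∑ i ∈ S, (ℓ i).indicator (fun _ => c i) y) ^ q ∂μ
      ≤ ∫⁻ y, K ^ (q - 1) * ∑ i ∈ S, (ℓ i).indicator (fun _ => c i ^ q) y ∂μ :=
        lintegral_mono (rpow_sum_indicator_le_of_overlap hq hK c)
    _ = K ^ (q - 1) * ∑ i ∈ S, c i ^ q * μ (ℓ i) := by
        have hmeas : ∀ i ∈ S, Measurable ((ℓ i).indicator fun _ => c i ^ q) :=
          fun i _ => measurable_const.indicator (hℓ i)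
        rw [lintegral_const_mul _ (Finset.measurable_sum _ hmeas), lintegral_finsetSum _ hmeas]
        simp only [lintegral_indicator_const (hℓ _)]

theorem eLpNorm_sum_mul_indicator_le_of_overlap (μ : Measure α) (hq : 1 ≤ q)
    (hℓ : ∀ i, MeasurableSet (ℓ i)) (hK : ∀ i, ({j | (ℓ i ∩ ℓ j).Nonempty}.ncard : ℝ≥0∞) ≤ K)
    (c : ι → ℝ) :
    eLpNorm (fun y => ∑ i ∈ S, c i * (ℓ i).indicator (fun _ => (1 : ℝ)) y) (ENNReal.ofReal q) μ
      ≤ (K ^ (q - 1) * ∑ i ∈ S, ‖c i‖ₑ ^ q * μ (ℓ i)) ^ (1 / q) := by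
  have hq0 : 0 < q := by linarith
  rw [eLpNorm_eq_lintegral_rpow_enorm_toReal (by simpa using hq0) ENNReal.ofReal_ne_top,
    ENNReal.toReal_ofReal hq0.le]
  gcongr
  refine (lintegral_mono fun y => ?_).trans
    (lintegral_rpow_sum_indicator_le_of_overlap μ hq hℓ hK _)
  gcongr
  refine (enorm_sum_le _ _).trans (le_of_eq (sum_congr rfl fun i _ => ?_))
  by_cases hy : y ∈ ℓ i <;> simp [hy]

end Overlap

theorem ENNReal.rpow_mul_le_rpow_sub_one_of_holderConjugate {p q : ℝ}
    (hpq : p.HolderConjugate q) {V W L a : ℝ≥0∞} (h : V⁻¹ * W * (V⁻¹ * L) ^ (p - 1) ≤ a) :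
    (V⁻¹ * W ^ (1 / p)) ^ q * L ≤ a ^ (q - 1) := by
  have hp := hpq.lt
  have hq := hpq.symm.lt
  have hpq_sum := hpq.mul_eq_add
  have h_exp : (p - 1) * (q - 1) = 1 := by linear_combination hpq_sum
  have h_div : 1 / p * q = q - 1 := by rw [one_div_mul_eq_div, hpq.symm.div_conj_eq_sub_one]
  calc (V⁻¹ * W ^ (1 / p)) ^ q * L
      = (V⁻¹) ^ (q - 1) * W ^ (q - 1) * (V⁻¹ * L) := by
        rw [ENNReal.mul_rpow_of_nonneg _ _ (by linarith), ← ENNReal.rpow_mul, h_div]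
        nth_rw 1 [show q = (q - 1) + 1 by ring]
        rw [ENNReal.rpow_add_of_nonneg _ _ (by linarith) zero_le_one, ENNReal.rpow_one]
        ring
    _ = (V⁻¹ * W * (V⁻¹ * L) ^ (p - 1)) ^ (q - 1) := by
        rw [ENNReal.mul_rpow_of_nonneg _ _ (by linarith),
          ENNReal.mul_rpow_of_nonneg _ _ (by linarith), ← ENNReal.rpow_mul, h_exp, ENNReal.rpow_one]
    _ ≤ a ^ (q - 1) := ENNReal.rpow_le_rpow h (by linarith)

theorem enorm_mul_div_toReal_mul_setIntegral_rpow_le {β : Type*} [MeasurableSpace β]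
    (μ : Measure β) (s : Set β) {w : β → ℝ} (hw : ∀ x, 0 ≤ w x) (b : ℝ) (V : ℝ≥0∞) {t : ℝ}
    (ht : 0 ≤ t) :
    ‖b / V.toReal * (∫ x in s, w x ∂μ) ^ t‖ₑ ≤
      ‖b‖ₑ * (V⁻¹ * (∫⁻ x in s, ENNReal.ofReal (w x) ∂μ) ^ t) := by
  have hI : 0 ≤ ∫ x in s, w x ∂μ := integral_nonneg hw
  rw [div_eq_mul_inv, enorm_mul, enorm_mul, mul_assoc, ← ENNReal.toReal_inv]
  gcongr
  · rw [Real.enorm_eq_ofReal ENNReal.toReal_nonneg]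
    exact ENNReal.ofReal_toReal_le
  · rw [Real.enorm_eq_ofReal (Real.rpow_nonneg hI t), ← ENNReal.ofReal_rpow_of_nonneg hI ht]
    gcongr
    rw [← Real.enorm_eq_ofReal hI]
    refine (enorm_integral_le_lintegral_enorm _).trans (le_of_eq (lintegral_congr fun x => ?_))
    exact Real.enorm_eq_ofReal (hw x)

theorem measurableSet_selFace {n : ℕ} (k N : ℕ) (z : Fin n → ℤ) (ρ : (Fin n → Fin N) → ℝ)
    (sel : (Fin n → Fin N) → FaceIdx n k) (δ' : ℝ) (m : Fin n → Fin N) :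
    MeasurableSet (selFace k N z ρ sel δ' m) :=
  isClosed_cthickening.measurableSet

theorem enorm_rpow_mul_le_ApLoc {n k N : ℕ} (z : Fin n → ℤ) (ρ : (Fin n → Fin N) → ℝ)
    (sel : (Fin n → Fin N) → FaceIdx n k) {w : (Fin n → ℝ) → ℝ} (hw : ∀ x, 0 ≤ w x) {p : ℝ}
    (hp : 1 < p) (b : ℝ) (m : Fin n → Fin N) :
    ‖b / (volume (selFace k N z ρ sel (N : ℝ)⁻¹ m)).toReal *
        (∫ x in gridCell N z m, w x) ^ (1 / p)‖ₑ ^ (p / (p - 1)) *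
      volume.withDensity (fun y => ENNReal.ofReal (w y) ^ (1 - p / (p - 1)))
        (selFace k N z ρ sel (N : ℝ)⁻¹ m) ≤
      ‖b‖ₑ ^ (p / (p - 1)) * ApLoc k N z ρ sel w p ^ (p / (p - 1) - 1) := by
  have hpq : p.HolderConjugate (p / (p - 1)) := .conjExponent hp
  have hq : 0 ≤ p / (p - 1) := hpq.symm.nonneg
  rw [withDensity_apply _ (measurableSet_selFace k N z ρ sel _ m)]
  calc _ ≤ (‖b‖ₑ * ((volume (selFace k N z ρ sel (N : ℝ)⁻¹ m))⁻¹ *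
          (∫⁻ x in gridCell N z m, ENNReal.ofReal (w x)) ^ (1 / p))) ^ (p / (p - 1)) *
        ∫⁻ y in selFace k N z ρ sel (N : ℝ)⁻¹ m, ENNReal.ofReal (w y) ^ (1 - p / (p - 1)) := by
        gcongr
        exact enorm_mul_div_toReal_mul_setIntegral_rpow_le _ _ hw b _ hpq.one_div_nonneg
    _ ≤ ‖b‖ₑ ^ (p / (p - 1)) * ApLoc k N z ρ sel w p ^ (p / (p - 1) - 1) := by
        rw [ENNReal.mul_rpow_of_nonneg _ _ hq, mul_assoc]
        gcongr
        exact ENNReal.rpow_mul_le_rpow_sub_one_of_holderConjugate hpq (le_iSup_of_le m le_rfl)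

theorem ENNReal.rpow_sub_one_rpow_one_div_of_holderConjugate {p q : ℝ}
    (hpq : p.HolderConjugate q) (x : ℝ≥0∞) : (x ^ (q - 1)) ^ (1 / q) = x ^ (1 / p) := by
  rw [← ENNReal.rpow_mul, sub_mul, one_mul, mul_one_div_cancel hpq.symm.ne_zero, one_div, one_div,
    hpq.symm.one_sub_inv]

theorem indicator_sum_estimate_general (p : ℝ) (hp : 1 < p)
    (A : ℝ) (hA : 0 < A) :
    ∃ C : ℝ, 0 < C ∧
      ∀ (N : ℕ), 1 < N → ∀ (δ : ℝ), δ = (N : ℝ)⁻¹ →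
      ∀ (z : Fin 2 → ℤ) (ρ : (Fin 2 → Fin N) → ℝ), inGamma N ρ →
      ∀ sel : (Fin 2 → Fin N) → FaceIdx 2 1,
      (∀ m, ({m' : Fin 2 → Fin N |
          (selFace 1 N z ρ sel δ m ∩ selFace 1 N z ρ sel δ m').Nonempty}.ncard : ℝ) ≤
        A * δ ^ (-(5 : ℝ) / 4)) →
      ∀ w : (Fin 2 → ℝ) → ℝ, (∀ x, 0 ≤ w x) → LocallyIntegrable w volume →
      ApLoc 1 N z ρ sel w p ≠ ⊤ →
      ∀ b : (Fin 2 → Fin N) → ℝ, (∀ m, 0 ≤ b m) →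
      (∑ m ∈ Finset.univ.filter (fun m => (sel m).1.1 = ({1} : Finset (Fin 2))),
          b m ^ (p / (p - 1)) = 1) →
      eLpNorm
        (fun y => ∑ m ∈ Finset.univ.filter (fun m => (sel m).1.1 = ({1} : Finset (Fin 2))),
          b m / (volume (selFace 1 N z ρ sel δ m)).toReal *
            (∫ x in gridCell N z m, w x) ^ (1 / p) *
            Set.indicator (selFace 1 N z ρ sel δ m) (fun _ => (1 : ℝ)) y)
        (ENNReal.ofReal (p / (p - 1)))
        ((volume.withDensity fun y => ENNReal.ofReal (w y) ^ (1 - p / (p - 1))).restrict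
          (sevenCube z)) ≤
        ENNReal.ofReal (C * δ ^ (-(5 : ℝ) / (4 * p))) * ApLoc 1 N z ρ sel w p ^ (1 / p) := by
  have hpq : p.HolderConjugate (p / (p - 1)) := .conjExponent hp
  refine ⟨A ^ (1 / p), by positivity, ?_⟩
  intro N _ δ rfl z ρ _ sel hsel w hw _ _ b hb hb_sum
  set S := Finset.univ.filter fun m : Fin 2 → Fin N => (sel m).1.1 = ({1} : Finset (Fin 2))
  set K := ENNReal.ofReal (A * (N : ℝ)⁻¹ ^ (-(5 : ℝ) / 4))
  set 𝔄 := ApLoc 1 N z ρ sel w p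
  have hK : ∀ m, ({m' | (selFace 1 N z ρ sel (N : ℝ)⁻¹ m ∩
      selFace 1 N z ρ sel (N : ℝ)⁻¹ m').Nonempty}.ncard : ℝ≥0∞) ≤ K := fun m => by
    rw [← ENNReal.ofReal_natCast]
    exact ENNReal.ofReal_le_ofReal (hsel m)
  have hb_sum' : ∑ m ∈ S, ‖b m‖ₑ ^ (p / (p - 1)) = 1 := by
    calc _ = ENNReal.ofReal (∑ m ∈ S, b m ^ (p / (p - 1))) := by
          rw [ENNReal.ofReal_sum_of_nonneg fun m _ => Real.rpow_nonneg (hb m) _]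
          refine Finset.sum_congr rfl fun m _ => ?_
          rw [Real.enorm_of_nonneg (hb m), ENNReal.ofReal_rpow_of_nonneg (hb m) hpq.symm.nonneg]
      _ = 1 := by rw [hb_sum, ENNReal.ofReal_one]
  calc _ ≤ (K ^ (p / (p - 1) - 1) * 𝔄 ^ (p / (p - 1) - 1)) ^ (1 / (p / (p - 1))) := by
        refine (eLpNorm_sum_mul_indicator_le_of_overlap _ hpq.symm.lt.le
          (measurableSet_selFace 1 N z ρ sel _) hK _).trans ?_
        gcongr
        calc _ ≤ ∑ m ∈ S, ‖b m‖ₑ ^ (p / (p - 1)) * 𝔄 ^ (p / (p - 1) - 1) :=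
            Finset.sum_le_sum fun m _ => (mul_le_mul_right (Measure.restrict_apply_le _ _) _).trans
              (enorm_rpow_mul_le_ApLoc z ρ sel hw hp (b m) m)
          _ = 𝔄 ^ (p / (p - 1) - 1) := by rw [← Finset.sum_mul, hb_sum', one_mul]
    _ = ENNReal.ofReal (A ^ (1 / p) * (N : ℝ)⁻¹ ^ (-(5 : ℝ) / (4 * p))) * 𝔄 ^ (1 / p) := by
        rw [← ENNReal.mul_rpow_of_nonneg _ _ (by linarith [hpq.symm.lt]),
          ENNReal.rpow_sub_one_rpow_one_div_of_holderConjugate hpq,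
          ENNReal.mul_rpow_of_nonneg _ _ hpq.one_div_nonneg,
          ENNReal.ofReal_rpow_of_nonneg (by positivity) hpq.one_div_nonneg,
          Real.mul_rpow hA.le (by positivity), ← Real.rpow_mul (by positivity)]
        congr 4
        ring

/-- the key `L^{p'}(7Q_z, w^{1-p'})` estimate for sums of indicators of the
selected vertical fattened sides, given the `A δ^{-5/4}` overlap property of the selection
and `[w]_{A^S_{p,ρ,z}} < ∞`, with constant `C` depending only on `A` and `p`. -/
theorem indicator_sum_estimate (p : ℝ) (hp : 1 < p) (hp' : ∃ m : ℕ, p / (p - 1) = (m : ℝ))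
    (A : ℝ) (hA : 0 < A) :
    ∃ C : ℝ, 0 < C ∧
      ∀ (N : ℕ), 1 < N → ∀ (δ : ℝ), δ = (N : ℝ)⁻¹ →
      ∀ (z : Fin 2 → ℤ) (ρ : (Fin 2 → Fin N) → ℝ), inGamma N ρ →
      ∀ sel : (Fin 2 → Fin N) → FaceIdx 2 1,
      (∀ m, ({m' : Fin 2 → Fin N |
          (selFace 1 N z ρ sel δ m ∩ selFace 1 N z ρ sel δ m').Nonempty}.ncard : ℝ) ≤
        A * δ ^ (-(5 : ℝ) / 4)) →
      ∀ w : (Fin 2 → ℝ) → ℝ, (∀ x, 0 ≤ w x) → LocallyIntegrable w volume →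
      ApLoc 1 N z ρ sel w p ≠ ⊤ →
      ∀ b : (Fin 2 → Fin N) → ℝ, (∀ m, 0 ≤ b m) →
      (∑ m ∈ Finset.univ.filter (fun m => (sel m).1.1 = ({1} : Finset (Fin 2))),
          b m ^ (p / (p - 1)) = 1) →
      eLpNorm
        (fun y => ∑ m ∈ Finset.univ.filter (fun m => (sel m).1.1 = ({1} : Finset (Fin 2))),
          b m / (volume (selFace 1 N z ρ sel δ m)).toReal *
            (∫ x in gridCell N z m, w x) ^ (1 / p) *
            Set.indicator (selFace 1 N z ρ sel δ m) (fun _ => (1 : ℝ)) y)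
        (ENNReal.ofReal (p / (p - 1)))
        ((volume.withDensity fun y => ENNReal.ofReal (w y) ^ (1 - p / (p - 1))).restrict
          (sevenCube z)) ≤
        ENNReal.ofReal (C * δ ^ (-(5 : ℝ) / (4 * p))) * ApLoc 1 N z ρ sel w p ^ (1 / p) :=
  indicator_sum_estimate_general p hp A hA

end
end
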